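/- If μ((θ, target]) ≤ ε, then the set of sample vectors S (of length n+1) for which the error of choose(label_sample(target, S)) exceeds ε is contained in the set of sample vectors S for which every entry x of S satisfies (if x ≤ target then x else 0) < θ. -/

import Mathlib

open MeasureTheory Set

noncomputable def Error (μ : Measure NNReal) (target h : NNReal) : ENNReal :=
  μ {x | (x ≤ h) ≠ (x ≤ target)}

noncomputable def labelSample (target : NNReal) {n : ℕ} (S : Fin (n + 1) → NNReal) :
    Fin (n + 1) → NNReal × Bool :=
  fun i => (S i, decide (S i ≤ target))

noncomputable def chooseHyp {n : ℕ} (S : Fin (n + 1) → NNReal × Bool) : NNReal :=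
  Finset.univ.sup fun i => if (S i).2 then (S i).1 else 0

/-! The learned threshold never exceeds `target`, so its error region is `(h, target]`; once one
positive example reaches `θ`, also `θ ≤ h`, and the error is at most `μ (θ, target] ≤ ε`. -/

theorem setOf_le_ne_le_eq_Ioc {α : Type*} [LinearOrder α] {h target : α} (hle : h ≤ target) :
    {x : α | (x ≤ h) ≠ (x ≤ target)} = Ioc h target := by
  ext x
  by_cases hxh : x ≤ h
  · simp [hxh, hxh.trans hle]
  · simp [hxh, not_le.mp hxh]

theorem Error_eq_measure_Ioc (μ : Measure NNReal) {target h : NNReal} (hle : h ≤ target) :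
    Error μ target h = μ (Ioc h target) := by
  rw [Error, setOf_le_ne_le_eq_Ioc hle]

theorem chooseHyp_labelSample_le (target : NNReal) {n : ℕ} (S : Fin (n + 1) → NNReal) :
    chooseHyp (labelSample target S) ≤ target := by
  refine Finset.sup_le fun j _ => ?_
  by_cases hj : S j ≤ target <;> simp [labelSample, hj]

theorem le_chooseHyp_labelSample (target : NNReal) {n : ℕ} (S : Fin (n + 1) → NNReal)
    (i : Fin (n + 1)) :
    (if S i ≤ target then S i else 0) ≤ chooseHyp (labelSample target S) :=
  Finset.le_sup_of_le (Finset.mem_univ i) (by simp [labelSample])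

theorem all_missed_general (μ : Measure NNReal) (target : NNReal)
    (ε : NNReal) (θ : NNReal) (n : ℕ)
    (h : μ (Ioc θ target) ≤ (ε : ENNReal)) :
    {S : Fin (n + 1) → NNReal |
        Error μ target (chooseHyp (labelSample target S)) > (ε : ENNReal)} ⊆
      {S : Fin (n + 1) → NNReal | ∀ i, (if S i ≤ target then S i else 0) < θ} := by
  intro S hS i
  by_contra! hθ
  have hθ_le : θ ≤ chooseHyp (labelSample target S) :=
    hθ.trans (le_chooseHyp_labelSample target S i)
  have hError : Error μ target (chooseHyp (labelSample target S)) ≤ ε :=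
    calc Error μ target (chooseHyp (labelSample target S))
        = μ (Ioc (chooseHyp (labelSample target S)) target) :=
          Error_eq_measure_Ioc μ (chooseHyp_labelSample_le target S)
      _ ≤ μ (Ioc θ target) := measure_mono (Ioc_subset_Ioc_left hθ_le)
      _ ≤ ε := h
  exact hError.not_gt hS

theorem all_missed (μ : Measure NNReal) [IsProbabilityMeasure μ] (target : NNReal)
    (ε : NNReal) (θ : NNReal) (n : ℕ)
    (h : μ (Ioc θ target) ≤ (ε : ENNReal)) :
    {S : Fin (n + 1) → NNReal |
        Error μ target (chooseHyp (labelSample target S)) > (ε : ENNReal)} ⊆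
      {S : Fin (n + 1) → NNReal | ∀ i, (if S i ≤ target then S i else 0) < θ} :=
  all_missed_general μ target ε θ n h
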